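/- Let 0 < ε < 1 and let A = {z ∈ ℂ : 1−ε < |z| < 1+ε}. Suppose g is holomorphic on A and satisfies g(vw) = g(v) + g(w) for all v, w ∈ A such that vw ∈ A. Then g(z) = 0 for all z ∈ A. -/

import Mathlib

/-- The annulus `1-ε < |z| < 1+ε` around the unit circle. -/
def annulus (ε : ℝ) : Set ℂ := {z : ℂ | 1 - ε < ‖z‖ ∧ ‖z‖ < 1 + ε}

lemma isOpen_annulus (ε : ℝ) : IsOpen (annulus ε) := by
  have : annulus ε = (fun z : ℂ => ‖z‖) ⁻¹' Set.Ioo (1 - ε) (1 + ε) := by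
    ext z; simp [annulus, Set.mem_Ioo]
  rw [this]
  exact isOpen_Ioo.preimage continuous_norm

lemma isPreconnected_annulus (ε : ℝ) : IsPreconnected (annulus ε) := by
  have hmap : annulus ε =
      (fun p : ℝ × ℝ => (p.1 : ℂ) * Complex.exp (p.2 * Complex.I)) ''
        ((Set.Ioo (1 - ε) (1 + ε) ∩ Set.Ici 0) ×ˢ Set.univ) := by
    ext z
    constructor
    · rintro ⟨h1, h2⟩
      exact ⟨(‖z‖, Complex.arg z), ⟨⟨⟨h1, h2⟩, norm_nonneg z⟩, trivial⟩,
        Complex.norm_mul_exp_arg_mul_I z⟩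
    · rintro ⟨⟨r, θ⟩, ⟨⟨⟨hr1, hr2⟩, hr0⟩, -⟩, rfl⟩
      have habs : ‖(r : ℂ) * Complex.exp (θ * Complex.I)‖ = r := by
        rw [norm_mul, Complex.norm_exp_ofReal_mul_I, mul_one, Complex.norm_real,
          Real.norm_of_nonneg hr0]
      exact ⟨by rw [habs]; exact hr1, by rw [habs]; exact hr2⟩
  rw [hmap]
  exact ((((convex_Ioo _ _).inter (convex_Ici 0)).isPreconnected).prod
    isPreconnected_univ).image _ (Continuous.continuousOn (by continuity))

set_option maxHeartbeats 1000000 in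
/-- The only holomorphic solution on a full annulus encircling
the origin of the multiplicative Cauchy equation `g(vw) = g(v) + g(w)` is the
zero function. -/
theorem stmt_9 (ε : ℝ) (hε0 : 0 < ε) (hε1 : ε < 1) (g : ℂ → ℂ)
    (hg : AnalyticOnNhd ℂ g (annulus ε))
    (hfe : ∀ v ∈ annulus ε, ∀ w ∈ annulus ε, v * w ∈ annulus ε →
      g (v * w) = g v + g w) :
    ∀ z ∈ annulus ε, g z = 0 := by
  have h1 : (1 : ℂ) ∈ annulus ε := by
    constructor <;> simp <;> linarith
  -- g 1 = 0
  have hg1 : g 1 = 0 := by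
    have h := hfe 1 h1 1 h1 (by rwa [mul_one])
    rw [mul_one] at h
    exact (left_eq_add.mp h)
  -- Step: v * deriv g v = deriv g 1 for v in the annulus
  have hkey : ∀ v ∈ annulus ε, v * deriv g v = deriv g 1 := by
    intro v hv
    -- eventual equality near 1
    have hS : IsOpen {w : ℂ | w ∈ annulus ε ∧ v * w ∈ annulus ε} :=
      (isOpen_annulus ε).inter ((isOpen_annulus ε).preimage (continuous_const.mul continuous_id))
    have h1S : (1 : ℂ) ∈ {w : ℂ | w ∈ annulus ε ∧ v * w ∈ annulus ε} :=
      ⟨h1, by rwa [mul_one]⟩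
    have hev : (fun w => g (v * w)) =ᶠ[nhds (1 : ℂ)] (fun w => g v + g w) :=
      Filter.eventuallyEq_of_mem (hS.mem_nhds h1S) (fun w hw => hfe v hv w hw.1 hw.2)
    -- derivative of LHS at 1
    have hd1 : HasDerivAt (fun w => g (v * w)) (v * deriv g v) 1 := by
      have hgv : HasDerivAt g (deriv g v) (v * 1) := by
        rw [mul_one]; exact (hg v hv).differentiableAt.hasDerivAt
      have hin : HasDerivAt (fun w : ℂ => v * w) v 1 := by
        simpa using (hasDerivAt_id (1 : ℂ)).const_mul v
      have := hgv.comp 1 hin; rw [mul_comm (deriv g v) v] at this; exact this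
    -- derivative of RHS at 1
    have hd2 : HasDerivAt (fun w => g v + g w) (deriv g 1) 1 :=
      ((hg 1 h1).differentiableAt.hasDerivAt).const_add (g v)
    have hd2' : HasDerivAt (fun w => g v + g w) (v * deriv g v) 1 :=
      hd1.congr_of_eventuallyEq hev.symm
    exact hd2'.unique hd2
  set c : ℂ := deriv g 1 with hc
  -- sphere is in annulus
  have hsph : Metric.sphere (0 : ℂ) 1 ⊆ annulus ε := by
    intro z hz
    have : ‖z‖ = 1 := by
      simpa using mem_sphere_zero_iff_norm.mp hz
    constructor <;> rw [this] <;> linarith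
  -- circle integral of deriv g is zero
  have hint0 : (∮ z in C(0, 1), deriv g z) = 0 := by
    refine circleIntegral.integral_eq_zero_of_hasDerivWithinAt (f := g) zero_le_one (fun z hz => ?_)
    exact (hg z (hsph hz)).differentiableAt.hasDerivAt.hasDerivWithinAt
  -- circle integral of deriv g equals c * (2πi)
  have hint1 : (∮ z in C(0, 1), deriv g z) = c * (2 * Real.pi * Complex.I) := by
    have heq : Set.EqOn (deriv g) (fun z => c • (z - 0)⁻¹) (Metric.sphere (0 : ℂ) 1) := by
      intro z hz
      have hzA := hsph hz
      have hz0 : z ≠ 0 := by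
        intro h; rw [h] at hzA; simp [annulus] at hzA; linarith [hzA.1]
      have hk := hkey z hzA
      show deriv g z = c • (z - 0)⁻¹
      rw [smul_eq_mul, sub_zero, eq_comm, mul_inv_eq_iff_eq_mul₀ hz0, mul_comm]
      exact hk.symm
    calc (∮ z in C(0, 1), deriv g z) = ∮ z in C(0, 1), c • (z - 0)⁻¹ :=
          circleIntegral.integral_congr zero_le_one heq
      _ = c • ∮ z in C(0, 1), (z - 0)⁻¹ := circleIntegral.integral_smul c _ 0 1
      _ = c * (2 * Real.pi * Complex.I) := by
          rw [circleIntegral.integral_sub_center_inv 0 one_ne_zero]; simp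
  have hc0 : c = 0 := by
    rw [hint0] at hint1
    have h2pi : (2 * (Real.pi : ℂ) * Complex.I) ≠ 0 := by
      simp [Real.pi_ne_zero, Complex.I_ne_zero, Complex.ofReal_ne_zero]
    exact (mul_eq_zero.mp hint1.symm).resolve_right h2pi
  -- deriv g = 0 on annulus
  have hderiv0 : ∀ z ∈ annulus ε, deriv g z = 0 := by
    intro z hz
    have hz0 : z ≠ 0 := by
      intro h; rw [h] at hz; simp [annulus] at hz; linarith [hz.1]
    have hk := hkey z hz
    rw [hc0] at hk
    exact (mul_eq_zero.mp hk).resolve_left hz0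
  -- g is locally constant near 1, equal to g 1 = 0
  obtain ⟨r, hr0, hball⟩ := Metric.isOpen_iff.mp (isOpen_annulus ε) 1 h1
  have hev : g =ᶠ[nhds (1 : ℂ)] (fun _ => (0 : ℂ)) := by
    refine Filter.eventuallyEq_of_mem (Metric.ball_mem_nhds 1 hr0) (fun y hy => ?_)
    have hdiff : DifferentiableOn ℂ g (Metric.ball (1 : ℂ) r) :=
      fun x hx => (hg x (hball hx)).differentiableAt.differentiableWithinAt
    have hfd : ∀ x ∈ Metric.ball (1 : ℂ) r,
        fderivWithin ℂ g (Metric.ball (1 : ℂ) r) x = 0 := by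
      intro x hx
      rw [fderivWithin_of_isOpen Metric.isOpen_ball hx]
      ext
      simp [fderiv_eq_smul_deriv, hderiv0 x (hball hx)]
    have := (convex_ball (1 : ℂ) r).is_const_of_fderivWithin_eq_zero hdiff hfd hy
      (Metric.mem_ball_self hr0)
    rw [this, hg1]
  exact fun z hz =>
    hg.eqOn_of_preconnected_of_eventuallyEq analyticOnNhd_const
      (isPreconnected_annulus ε) h1 hev hz
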